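/- arXiv:1304.4481 — 4 statements merged into one kernel-verified Lean document; each statement's English description precedes it below -/
import Mathlib

section
/- Let R be a ring and M a left R-module. Suppose S₁ and S₂ are rings such that M carries an S₁-module structure and an S₂-module structure, each commuting with the R-action, and E₁, E₂ are injective cogenerators of the categories of S₁-modules and S₂-modules respectively. Then the dual Hom_{S₁}(M, E₁) is isomorphic, as a right R-module, to a direct summand of a direct product of copies of the dual Hom_{S₂}(M, E₂); consequently Prod(Hom_{S₁}(M, E₁)) = Prod(Hom_{S₂}(M, E₂)). -/
universe u

open MulOpposite DirectSum

noncomputable section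

/-- The additive group `ℚ/ℤ`. -/
abbrev RatCircle : Type := AddCircle (1 : ℚ)

/-- The character group `Hom_ℤ(M, ℚ/ℤ)` of an abelian group `M`. -/
def Character (M : Type u) [AddCommGroup M] : Type u := M →+ RatCircle

namespace Character

instance instAddCommGroup (M : Type u) [AddCommGroup M] : AddCommGroup (Character M) :=
  inferInstanceAs (AddCommGroup (M →+ RatCircle))

instance instFunLike (M : Type u) [AddCommGroup M] : FunLike (Character M) M RatCircle :=
  inferInstanceAs (FunLike (M →+ RatCircle) M RatCircle)

instance instAddMonoidHomClass (M : Type u) [AddCommGroup M] :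
    AddMonoidHomClass (Character M) M RatCircle :=
  inferInstanceAs (AddMonoidHomClass (M →+ RatCircle) M RatCircle)

@[ext] lemma ext {M : Type u} [AddCommGroup M] {f g : Character M}
    (h : ∀ m, f m = g m) : f = g := DFunLike.ext _ _ h

variable {R : Type u} [Ring R]

/-- If `M` is a left `R`-module then `Character M` is a right `R`-module,
via `(f • r) m = f (r • m)`. -/
instance instSMulRight {M : Type u} [AddCommGroup M] [Module R M] :
    SMul Rᵐᵒᵖ (Character M) where
  smul r f :=
    ((f : M →+ RatCircle).comp (DistribMulAction.toAddMonoidHom M r.unop) : M →+ RatCircle)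

lemma smul_right_apply {M : Type u} [AddCommGroup M] [Module R M]
    (r : Rᵐᵒᵖ) (f : Character M) (m : M) : (r • f) m = f (r.unop • m) := rfl

instance moduleRight {M : Type u} [AddCommGroup M] [Module R M] :
    Module Rᵐᵒᵖ (Character M) where
  one_smul f := ext fun m => by rw [smul_right_apply, unop_one, one_smul]
  mul_smul r s f := ext fun m => by
    rw [smul_right_apply, smul_right_apply, smul_right_apply, unop_mul, mul_smul]
  smul_zero r := ext fun m => rfl
  smul_add r f g := ext fun m => rfl
  add_smul r s f := ext fun m => by
    show f ((r + s).unop • m) = f (r.unop • m) + f (s.unop • m)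
    rw [unop_add, add_smul, map_add]
  zero_smul f := ext fun m => by
    show f ((0 : Rᵐᵒᵖ).unop • m) = 0
    rw [unop_zero, zero_smul, map_zero]

/-- If `M` is a right `R`-module then `Character M` is a left `R`-module,
via `(r • f) m = f (m • r)`. -/
instance instSMulLeft {M : Type u} [AddCommGroup M] [Module Rᵐᵒᵖ M] :
    SMul R (Character M) where
  smul r f :=
    ((f : M →+ RatCircle).comp (DistribMulAction.toAddMonoidHom M (op r)) : M →+ RatCircle)

lemma smul_left_apply {M : Type u} [AddCommGroup M] [Module Rᵐᵒᵖ M]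
    (r : R) (f : Character M) (m : M) : (r • f) m = f (op r • m) := rfl

instance moduleLeft {M : Type u} [AddCommGroup M] [Module Rᵐᵒᵖ M] :
    Module R (Character M) where
  one_smul f := ext fun m => by rw [smul_left_apply, op_one, one_smul]
  mul_smul r s f := ext fun m => by
    rw [smul_left_apply, smul_left_apply, smul_left_apply, op_mul, mul_smul]
  smul_zero r := ext fun m => rfl
  smul_add r f g := ext fun m => rfl
  add_smul r s f := ext fun m => by
    show f (op (r + s) • m) = f (op r • m) + f (op s • m)
    rw [op_add, add_smul, map_add]
  zero_smul f := ext fun m => by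
    show f (op (0 : R) • m) = 0
    rw [op_zero, zero_smul, map_zero]

end Character

section Defs

variable (A : Type u) [Ring A]

/-- A pure embedding: an injective linear map such that every finite system of
linear equations with constants in `L` solvable in `M` is solvable in `L`. -/
def IsPureEmbedding {L M : Type u} [AddCommGroup L] [AddCommGroup M]
    [Module A L] [Module A M] (i : L →ₗ[A] M) : Prop :=
  Function.Injective i ∧
    ∀ (m n : ℕ) (r : Matrix (Fin m) (Fin n) A) (l : Fin m → L),
      (∃ x : Fin n → M, ∀ j, (∑ k, r j k • x k) = i (l j)) →
      ∃ y : Fin n → L, ∀ j, (∑ k, r j k • y k) = l j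

/-- A module is pure-injective if every pure embedding out of it splits. -/
def IsPureInjective (N : Type u) [AddCommGroup N] [Module A N] : Prop :=
  ∀ (M : Type u) [AddCommGroup M] [Module A M] (i : N →ₗ[A] M),
    IsPureEmbedding A i → ∃ π : M →ₗ[A] N, π.comp i = LinearMap.id

/-- `N` is (isomorphic to) a direct summand of `N'`. -/
def IsDirectSummand (N N' : Type u) [AddCommGroup N] [AddCommGroup N']
    [Module A N] [Module A N'] : Prop :=
  ∃ (i : N →ₗ[A] N') (π : N' →ₗ[A] N), π.comp i = LinearMap.id

/-- A module is indecomposable if it is nonzero and is not the internal direct sum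
of two nonzero submodules. -/
def IsIndecomposable (N : Type u) [AddCommGroup N] [Module A N] : Prop :=
  (∃ x : N, x ≠ 0) ∧ ∀ U V : Submodule A N, U ≠ ⊥ → V ≠ ⊥ → ¬ IsCompl U V

/-- An injective module: every linear map from a submodule of a module `B` into `E`
extends to `B`. -/
def IsInjectiveModule (E : Type u) [AddCommGroup E] [Module A E] : Prop :=
  ∀ (B : Type u) [AddCommGroup B] [Module A B] (L : Submodule A B) (g : L →ₗ[A] E),
    ∃ h : B →ₗ[A] E, ∀ x : L, h x = g x

/-- A cogenerator: points of any module are separated by maps into `E`. -/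
def IsCogenerator (E : Type u) [AddCommGroup E] [Module A E] : Prop :=
  ∀ (X : Type u) [AddCommGroup X] [Module A X] (x : X), x ≠ 0 →
    ∃ g : X →ₗ[A] E, g x ≠ 0

/-- A class of modules is closed under (arbitrary) direct products. -/
def ProdClosed (C : ModuleCat.{u} A → Prop) : Prop :=
  ∀ (ι : Type u) (f : ι → ModuleCat.{u} A), (∀ i, C (f i)) →
    C (ModuleCat.of A (∀ i, (f i : Type u)))

/-- A class of modules is closed under modules purely embedding into its members. -/
def PureSubClosed (C : ModuleCat.{u} A → Prop) : Prop :=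
  ∀ (N M : ModuleCat.{u} A) (i : N →ₗ[A] M), IsPureEmbedding A i → C M → C N

/-- A class of modules is closed under colimits of directed systems. -/
def DirLimClosed (C : ModuleCat.{u} A → Prop) : Prop :=
  ∀ (ι : Type u) [Preorder ι] [IsDirected ι (· ≤ ·)] [Nonempty ι] [DecidableEq ι]
    (G : ι → Type u) [∀ i, AddCommGroup (G i)] [∀ i, Module A (G i)]
    (f : ∀ i j, i ≤ j → G i →ₗ[A] G j) [DirectedSystem G (fun i j h => f i j h)],
    (∀ i, C (ModuleCat.of A (G i))) → C (ModuleCat.of A (Module.DirectLimit G f))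

/-- A definable subcategory: a class of modules (closed under isomorphism) which is closed
under direct products, colimits of directed systems, and pure submodules. -/
def IsDefinable (C : ModuleCat.{u} A → Prop) : Prop :=
  ProdClosed A C ∧ DirLimClosed A C ∧ PureSubClosed A C

end Defs


section DualMod

variable (S : Type u) [Ring S] (E : Type u) [AddCommGroup E] [Module S E]
variable (M : Type u) [AddCommGroup M] [Module S M]

/-- The dual `Hom_S(M, E)` of `M` with respect to the pair `(S, E)`. -/
def DualMod : Type u := M →ₗ[S] E

instance DualMod.instAddCommGroup : AddCommGroup (DualMod S E M) :=
  inferInstanceAs (AddCommGroup (M →ₗ[S] E))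

instance DualMod.instFunLike : FunLike (DualMod S E M) M E :=
  inferInstanceAs (FunLike (M →ₗ[S] E) M E)

instance DualMod.instLinearMapClass : LinearMapClass (DualMod S E M) S M E :=
  inferInstanceAs (LinearMapClass (M →ₗ[S] E) S M E)

@[ext] lemma DualMod.ext {f g : DualMod S E M} (h : ∀ m, f m = g m) : f = g :=
  DFunLike.ext _ _ h

variable {R : Type u} [Ring R] [Module R M] [SMulCommClass S R M]

/-- The action of `r : R` on `M` as an `S`-linear endomorphism. -/
def DualMod.scalarMap (r : R) : M →ₗ[S] M where
  toFun m := r • m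
  map_add' := smul_add r
  map_smul' s m := (smul_comm s r m).symm

/-- The dual `Hom_S(M, E)` of a left `R`-module `M` is a right `R`-module,
via `(f • r) m = f (r • m)`. -/
instance DualMod.instSMulRight : SMul Rᵐᵒᵖ (DualMod S E M) where
  smul r f := ((f : M →ₗ[S] E).comp (DualMod.scalarMap S M r.unop) : M →ₗ[S] E)

lemma DualMod.smul_right_apply (r : Rᵐᵒᵖ) (f : DualMod S E M) (m : M) :
    (r • f) m = f (r.unop • m) := rfl

instance DualMod.moduleRight : Module Rᵐᵒᵖ (DualMod S E M) where
  one_smul f := DualMod.ext _ _ _ fun m => by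
    rw [DualMod.smul_right_apply, unop_one, one_smul]
  mul_smul r s f := DualMod.ext _ _ _ fun m => by
    rw [DualMod.smul_right_apply, DualMod.smul_right_apply, DualMod.smul_right_apply,
      unop_mul, mul_smul]
  smul_zero r := DualMod.ext _ _ _ fun m => rfl
  smul_add r f g := DualMod.ext _ _ _ fun m => rfl
  add_smul r s f := DualMod.ext _ _ _ fun m => by
    show (f : M →ₗ[S] E) ((r + s).unop • m)
      = (f : M →ₗ[S] E) (r.unop • m) + (f : M →ₗ[S] E) (s.unop • m)
    rw [unop_add, add_smul, map_add]
  zero_smul f := DualMod.ext _ _ _ fun m => by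
    show (f : M →ₗ[S] E) ((0 : Rᵐᵒᵖ).unop • m) = 0
    rw [unop_zero, zero_smul, map_zero]

end DualMod

/-!
Write `X⁺ = Hom_ℤ(X, ℚ/ℤ)`. The module `S⁺` is an injective cogenerator of `S`-modules, and an
injective module embeds as a direct summand in a power of any cogenerator. Hence `E` is a summand
of a power of `S⁺` and `S⁺` is a summand of a power of `E`. Since `Hom_S(M, -)` preserves direct
summands and products, and `Hom_S(M, S⁺) ≅ M⁺` by adjunction, `Hom_S(M, E)` and `M⁺` each lie in
`Prod` of the other, for every injective cogenerator `E`; so all these duals have the same `Prod`.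
-/

namespace IsDirectSummand

variable {A : Type u} [Ring A] {N P Q : Type u} [AddCommGroup N] [AddCommGroup P]
  [AddCommGroup Q] [Module A N] [Module A P] [Module A Q]

theorem of_linearEquiv (e : P ≃ₗ[A] Q) : IsDirectSummand A P Q :=
  ⟨e.toLinearMap, e.symm.toLinearMap, e.symm_comp⟩

theorem trans (h₁ : IsDirectSummand A N P) (h₂ : IsDirectSummand A P Q) :
    IsDirectSummand A N Q := by
  obtain ⟨i₁, p₁, h₁⟩ := h₁
  obtain ⟨i₂, p₂, h₂⟩ := h₂
  refine ⟨i₂ ∘ₗ i₁, p₁ ∘ₗ p₂, ?_⟩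
  rw [LinearMap.comp_assoc, ← LinearMap.comp_assoc i₁, h₂, LinearMap.id_comp, h₁]

theorem pi (ι : Type u) (h : IsDirectSummand A P Q) : IsDirectSummand A (ι → P) (ι → Q) := by
  obtain ⟨i, p, hpi⟩ := h
  refine ⟨i.compLeft ι, p.compLeft ι, ?_⟩
  ext g a
  exact LinearMap.congr_fun hpi (g a)

end IsDirectSummand

/-- `N ∈ Prod(P)` in the notation of the paper. -/
def MemProd (A : Type u) [Ring A] (N P : Type u) [AddCommGroup N] [AddCommGroup P]
    [Module A N] [Module A P] : Prop :=
  ∃ ι : Type u, IsDirectSummand A N (ι → P)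

theorem IsDirectSummand.memProd {A : Type u} [Ring A] {N P : Type u} [AddCommGroup N]
    [AddCommGroup P] [Module A N] [Module A P] (h : IsDirectSummand A N P) : MemProd A N P :=
  ⟨PUnit, h.trans (.of_linearEquiv (LinearEquiv.funUnique PUnit A P).symm)⟩

theorem MemProd.trans {A : Type u} [Ring A] {N P Q : Type u} [AddCommGroup N] [AddCommGroup P]
    [AddCommGroup Q] [Module A N] [Module A P] [Module A Q]
    (h₁ : MemProd A N P) (h₂ : MemProd A P Q) : MemProd A N Q := by
  obtain ⟨ι, h₁⟩ := h₁
  obtain ⟨τ, h₂⟩ := h₂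
  exact ⟨ι × τ, h₁.trans ((h₂.pi ι).trans (.of_linearEquiv (LinearEquiv.curry A Q ι τ).symm))⟩

section Injective

variable {S : Type u} [Ring S] {E F : Type u} [AddCommGroup E] [Module S E]
  [AddCommGroup F] [Module S F]

theorem IsInjectiveModule.exists_leftInverse (hE : IsInjectiveModule S E) {B : Type u}
    [AddCommGroup B] [Module S B] (i : E →ₗ[S] B) (hi : Function.Injective i) :
    ∃ p : B →ₗ[S] E, p ∘ₗ i = LinearMap.id := by
  obtain ⟨p, hp⟩ := hE B (LinearMap.range i) (LinearEquiv.ofInjective i hi).symm.toLinearMap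
  refine ⟨p, LinearMap.ext fun x => ?_⟩
  rw [LinearMap.comp_apply, ← LinearEquiv.ofInjective_apply (h := hi), hp,
    LinearEquiv.coe_coe, LinearEquiv.symm_apply_apply, LinearMap.id_apply]

theorem IsCogenerator.injective_pi (hF : IsCogenerator S F) (X : Type u) [AddCommGroup X]
    [Module S X] : Function.Injective (LinearMap.pi fun g : X →ₗ[S] F => g) := by
  refine (injective_iff_map_eq_zero _).2 fun x hx => ?_
  by_contra hx₀
  obtain ⟨g, hg⟩ := hF X x hx₀
  exact hg (congrFun hx g)

theorem IsInjectiveModule.memProd (hE : IsInjectiveModule S E) (hF : IsCogenerator S F) :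
    MemProd S E F := by
  obtain ⟨p, hp⟩ := hE.exists_leftInverse _ (hF.injective_pi E)
  exact ⟨_, _, p, hp⟩

end Injective

namespace DualMod

variable {R S : Type u} [Ring R] [Ring S] (M : Type u) [AddCommGroup M] [Module R M]
  [Module S M] [SMulCommClass S R M] {E F : Type u} [AddCommGroup E] [Module S E]
  [AddCommGroup F] [Module S F]

def map (f : E →ₗ[S] F) : DualMod S E M →ₗ[Rᵐᵒᵖ] DualMod S F M where
  toFun g := (f ∘ₗ (g : M →ₗ[S] E) : M →ₗ[S] F)
  map_add' g g' := LinearMap.comp_add (g : M →ₗ[S] E) g' f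
  map_smul' _ _ := rfl

theorem map_comp {G : Type u} [AddCommGroup G] [Module S G] (f : E →ₗ[S] F)
    (f' : F →ₗ[S] G) :
    map (R := R) M f' ∘ₗ map M f = map M (f' ∘ₗ f) :=
  rfl

theorem map_id : map (R := R) M (LinearMap.id : E →ₗ[S] E) = LinearMap.id :=
  rfl

def piEquiv (κ : Type u) : DualMod S (κ → F) M ≃ₗ[Rᵐᵒᵖ] (κ → DualMod S F M) where
  toFun g k := (LinearMap.proj k ∘ₗ (g : M →ₗ[S] κ → F) : M →ₗ[S] F)
  invFun g := (LinearMap.pi fun k => (g k : M →ₗ[S] F) : M →ₗ[S] κ → F)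
  map_add' _ _ := rfl
  map_smul' _ _ := rfl
  left_inv _ := rfl
  right_inv _ := rfl

theorem _root_.IsDirectSummand.dualMod (h : IsDirectSummand S E F) :
    IsDirectSummand Rᵐᵒᵖ (DualMod S E M) (DualMod S F M) := by
  obtain ⟨i, p, hpi⟩ := h
  exact ⟨map M i, map M p, by rw [map_comp, hpi, map_id]⟩

theorem _root_.MemProd.dualMod (h : MemProd S E F) :
    MemProd Rᵐᵒᵖ (DualMod S E M) (DualMod S F M) := by
  obtain ⟨κ, h⟩ := h
  exact ⟨κ, (h.dualMod M).trans (.of_linearEquiv (piEquiv M κ))⟩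

end DualMod

namespace Character

variable {S : Type u} [Ring S] {X : Type u} [AddCommGroup X] [Module S X]

/-- Hom–tensor adjunction: `Hom_S(X, Hom_ℤ(S, ℚ/ℤ)) ≃ Hom_ℤ(S ⊗_S X, ℚ/ℤ)` and `S ⊗_S X = X`. -/
def linearMapEquiv : (X →ₗ[S] Character S) ≃+ Character X where
  toFun f := AddMonoidHom.mk' (fun x => f x 1) fun x y => by
    show f (x + y) 1 = f x 1 + f y 1
    rw [map_add]; rfl
  invFun χ :=
    { toFun x := AddMonoidHom.mk' (fun s => χ (s • x)) fun s t => by rw [add_smul, map_add]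
      map_add' x y := Character.ext fun s => by
        show χ (s • (x + y)) = χ (s • x) + χ (s • y)
        rw [smul_add, map_add]
      map_smul' s x := Character.ext fun t => by
        show χ (t • s • x) = χ ((op s • t) • x)
        rw [MulOpposite.smul_eq_mul_unop, unop_op, mul_smul] }
  left_inv f := LinearMap.ext fun x => Character.ext fun s => by
    show f (s • x) 1 = f x s
    rw [map_smul]
    show f x (op s • 1) = f x s
    rw [MulOpposite.smul_eq_mul_unop, unop_op, one_mul]
  right_inv χ := Character.ext fun x => by
    show χ ((1 : S) • x) = χ x
    rw [one_smul]
  map_add' _ _ := rfl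

theorem isCogenerator : IsCogenerator S (Character S) := by
  intro X _ _ x hx
  obtain ⟨χ, hχ⟩ := CharacterModule.exists_character_apply_ne_zero_of_ne_zero hx
  refine ⟨linearMapEquiv.symm χ, fun h => hχ ?_⟩
  have h₁ : χ ((1 : S) • x) = 0 := congrArg (fun φ : Character S => φ 1) h
  rwa [one_smul] at h₁

theorem isInjectiveModule : IsInjectiveModule S (Character S) := by
  intro B _ _ L g
  obtain ⟨χ, hχ⟩ := CharacterModule.dual_surjective_of_injective
    L.subtype.toAddMonoidHom.toIntLinearMap Subtype.val_injective (linearMapEquiv g)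
  refine ⟨linearMapEquiv.symm χ, fun x => ?_⟩
  suffices h : linearMapEquiv.symm χ ∘ₗ L.subtype = g from LinearMap.congr_fun h x
  apply linearMapEquiv.injective
  refine Character.ext fun y => ?_
  show χ ((1 : S) • (y : B)) = linearMapEquiv g y
  rw [one_smul, ← hχ]
  rfl

end Character

section Duality

variable {R S : Type u} [Ring R] [Ring S] (M : Type u) [AddCommGroup M] [Module R M]
  [Module S M] [SMulCommClass S R M] {E : Type u} [AddCommGroup E] [Module S E]

def DualMod.characterEquiv : DualMod S (Character S) M ≃ₗ[Rᵐᵒᵖ] Character M :=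
  { Character.linearMapEquiv with map_smul' := fun _ _ => rfl }

theorem DualMod.memProd_character (hE : IsInjectiveModule S E) :
    MemProd Rᵐᵒᵖ (DualMod S E M) (Character M) :=
  ((hE.memProd Character.isCogenerator).dualMod M).trans
    (IsDirectSummand.of_linearEquiv (characterEquiv M)).memProd

theorem Character.memProd_dualMod (hE : IsCogenerator S E) :
    MemProd Rᵐᵒᵖ (Character M) (DualMod S E M) :=
  (IsDirectSummand.of_linearEquiv (DualMod.characterEquiv (S := S) M).symm).memProd.trans
    ((Character.isInjectiveModule.memProd hE).dualMod M)

end Duality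

theorem dualities_give_same_Prod
    {R S₁ S₂ : Type u} [Ring R] [Ring S₁] [Ring S₂]
    (M : Type u) [AddCommGroup M] [Module R M]
    [Module S₁ M] [SMulCommClass S₁ R M]
    [Module S₂ M] [SMulCommClass S₂ R M]
    (E₁ : Type u) [AddCommGroup E₁] [Module S₁ E₁]
    (E₂ : Type u) [AddCommGroup E₂] [Module S₂ E₂]
    (hE₁inj : IsInjectiveModule S₁ E₁) (hE₁cog : IsCogenerator S₁ E₁)
    (hE₂inj : IsInjectiveModule S₂ E₂) (hE₂cog : IsCogenerator S₂ E₂) :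
    (∃ ι : Type u, IsDirectSummand Rᵐᵒᵖ (DualMod S₁ E₁ M) (ι → DualMod S₂ E₂ M)) ∧
    (∀ N : ModuleCat.{u} Rᵐᵒᵖ,
      (∃ ι : Type u, IsDirectSummand Rᵐᵒᵖ (N : Type u) (ι → DualMod S₁ E₁ M)) ↔
      (∃ ι : Type u, IsDirectSummand Rᵐᵒᵖ (N : Type u) (ι → DualMod S₂ E₂ M))) := by
  have h₁₂ : MemProd Rᵐᵒᵖ (DualMod S₁ E₁ M) (DualMod S₂ E₂ M) :=
    (DualMod.memProd_character M hE₁inj).trans (Character.memProd_dualMod M hE₂cog)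
  have h₂₁ : MemProd Rᵐᵒᵖ (DualMod S₂ E₂ M) (DualMod S₁ E₁ M) :=
    (DualMod.memProd_character M hE₂inj).trans (Character.memProd_dualMod M hE₁cog)
  exact ⟨h₁₂, fun N => ⟨fun hN => MemProd.trans hN h₁₂, fun hN => MemProd.trans hN h₂₁⟩⟩
end
end

section
/- Let K be a field and R = K⟨X, Y⟩ the free associative K-algebra on two generators. Then R is a domain and R has no uniform right ideal: for every nonzero right ideal I of R there exist nonzero right ideals J₁, J₂ of R contained in I with J₁ ∩ J₂ = 0. -/
/-!
The generators satisfy `X R ∩ Y R = 0`: comparing coefficients at words beginning with `X`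
shows that `X f = Y g` forces `f = 0`. Since `R` is a domain, left multiplication by any
nonzero `a` is injective, so `a X R` and `a Y R` are nonzero right ideals inside `a R` that
still meet only in `0`.
-/

universe u

open MulOpposite DirectSum

noncomputable section

theorem MonoidAlgebra.eq_zero_of_single_mul_eq_single_mul {R M : Type*} [Semiring R]
    [CancelMonoid M] {m m' : M} (hmm' : ∀ d d' : M, m * d ≠ m' * d') {r r' : R}
    {f g : MonoidAlgebra R M} (hr : IsLeftRegular r)
    (h : single m r * f = single m' r' * g) : f = 0 := by
  ext w
  have hcoeff := congr(($h).coeff (m * w))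
  rw [coeff_single_mul_mul, coeff_single_mul_of_forall_mul_ne _ _ (fun d => (hmm' w d).symm),
    ← mul_zero r] at hcoeff
  exact hr hcoeff

theorem FreeMonoid.of_mul_ne_of_mul {X : Type*} {i j : X} (hij : i ≠ j) (u v : FreeMonoid X) :
    of i * u ≠ of j * v := fun h =>
  hij (show i = j ∧ u = v by simpa using congr(FreeMonoid.toList $h)).1

theorem FreeAlgebra.eq_zero_of_ι_mul_eq_ι_mul {R X : Type*} [CommSemiring R] {i j : X}
    (hij : i ≠ j) {f g : FreeAlgebra R X} (h : ι R i * f = ι R j * g) : f = 0 := by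
  let e := equivMonoidAlgebraFreeMonoid (R := R) (X := X)
  have he : ∀ x, e (ι R x) = MonoidAlgebra.single (FreeMonoid.of x) 1 := by
    simp [e, equivMonoidAlgebraFreeMonoid]
  have h' := congr(e $h)
  rw [map_mul, map_mul, he, he] at h'
  exact e.injective ((MonoidAlgebra.eq_zero_of_single_mul_eq_single_mul
    (FreeMonoid.of_mul_ne_of_mul hij) isRegular_one.left h').trans (map_zero e).symm)

theorem Submodule.exists_le_inf_eq_bot_of_mul_inf_eq_bot {R : Type*} [Ring R] [NoZeroDivisors R]
    {x y : R} (hx : x ≠ 0) (hy : y ≠ 0) (hxy : ∀ r s : R, x * r = y * s → x * r = 0)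
    {I : Submodule Rᵐᵒᵖ R} (hI : I ≠ ⊥) :
    ∃ J₁ J₂ : Submodule Rᵐᵒᵖ R, J₁ ≤ I ∧ J₂ ≤ I ∧ J₁ ≠ ⊥ ∧ J₂ ≠ ⊥ ∧ J₁ ⊓ J₂ = ⊥ := by
  obtain ⟨a, haI, ha⟩ := exists_mem_ne_zero_of_ne_bot hI
  have mul_mem : ∀ z : R, a * z ∈ I := fun z => by
    simpa [op_smul_eq_mul] using I.smul_mem (op z) haI
  refine ⟨span Rᵐᵒᵖ {a * x}, span Rᵐᵒᵖ {a * y},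
    (span_singleton_le_iff_mem _ _).2 (mul_mem x), (span_singleton_le_iff_mem _ _).2 (mul_mem y),
    by simpa using mul_ne_zero ha hx, by simpa using mul_ne_zero ha hy, ?_⟩
  rw [eq_bot_iff]
  rintro z ⟨hzx, hzy⟩
  obtain ⟨r, rfl⟩ := mem_span_singleton.1 hzx
  obtain ⟨s, hs⟩ := mem_span_singleton.1 hzy
  simp only [smul_eq_mul_unop, mul_assoc] at hs ⊢
  rw [mem_bot, hxy _ _ (mul_left_cancel₀ ha hs).symm, mul_zero]

theorem free_algebra_domain_no_uniform_right_ideal (K : Type u) [Field K] :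
    IsDomain (FreeAlgebra K (Fin 2)) ∧
    ∀ I : Submodule (FreeAlgebra K (Fin 2))ᵐᵒᵖ (FreeAlgebra K (Fin 2)), I ≠ ⊥ →
      ∃ J₁ J₂ : Submodule (FreeAlgebra K (Fin 2))ᵐᵒᵖ (FreeAlgebra K (Fin 2)),
        J₁ ≤ I ∧ J₂ ≤ I ∧ J₁ ≠ ⊥ ∧ J₂ ≠ ⊥ ∧ J₁ ⊓ J₂ = ⊥ := by
  refine ⟨inferInstance, fun I hI => ?_⟩
  refine Submodule.exists_le_inf_eq_bot_of_mul_inf_eq_bot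
    (FreeAlgebra.ι_ne_zero (0 : Fin 2)) (FreeAlgebra.ι_ne_zero 1) (fun r s h => ?_) hI
  rw [FreeAlgebra.eq_zero_of_ι_mul_eq_ι_mul (by decide) h, mul_zero]

end
end

section
/- Let K be a field, let R = K⟨X, Y⟩ be the free associative K-algebra on two generators, and let E be a right R-module which is injective and contains R as an essential submodule (i.e. there is an embedding of R into E whose image meets every nonzero submodule of E nontrivially). Then for every set I, every nonzero direct summand of the direct product E^I is decomposable; in particular no direct product of copies of E, and in particular E itself, has an indecomposable direct summand. -/
universe u

open MulOpposite DirectSum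

noncomputable section

/-!
A direct summand `D` of `E^I` is again injective. A nonzero `d ∈ D` has a nonzero coordinate in
`E`, which by essentiality has a nonzero multiple in `R`; so some `u = d c` generates a copy of
`R_R` inside `D`. Since `XR ∩ YR = 0` in the free algebra, `uX R` and `uY R` are nonzero submodules
of `D` meeting trivially. In an injective module, a maximal essential extension of the first and a
maximal complement of it containing the second are complementary summands.
-/

namespace FreeAlgebra

theorem eq_zero_of_ι_mul_eq_ι_mul_s6 {R X : Type*} [CommSemiring R] {x y : X} (hxy : x ≠ y)
    {s t : FreeAlgebra R X} (h : ι R x * s = ι R y * t) : s = 0 := by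
  let φ := equivMonoidAlgebraFreeMonoid (R := R) (X := X)
  have hι : ∀ z, φ (ι R z) = MonoidAlgebra.single (FreeMonoid.of z) 1 := by
    intro z; simp [φ, equivMonoidAlgebraFreeMonoid, MonoidAlgebra.of_apply]
  have hφ := congrArg φ h
  simp only [map_mul, hι] at hφ
  suffices φ s = 0 from φ.injective (this.trans (map_zero φ).symm)
  ext w
  have hw := congrArg (MonoidAlgebra.coeff · (FreeMonoid.of x * w)) hφ
  simp only [MonoidAlgebra.coeff_single_mul_mul, one_mul] at hw
  rw [hw, MonoidAlgebra.coeff_single_mul_of_forall_mul_ne]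
  · rfl
  intro d hd
  have := congrArg FreeMonoid.toList hd
  simp only [FreeMonoid.toList_mul, FreeMonoid.toList_of, List.singleton_append,
    List.cons.injEq] at this
  exact hxy this.1.symm

/-- Over `Rᵐᵒᵖ`, the span of `op a` is the right ideal `a R`. -/
theorem disjoint_span_op_ι {R X : Type*} [CommSemiring R] {x y : X} (hxy : x ≠ y) :
    Disjoint (Submodule.span (FreeAlgebra R X)ᵐᵒᵖ {op (ι R x)})
      (Submodule.span (FreeAlgebra R X)ᵐᵒᵖ {op (ι R y)}) := by
  rw [Submodule.disjoint_def]
  rintro z hx hy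
  obtain ⟨a, rfl⟩ := Submodule.mem_span_singleton.1 hx
  obtain ⟨b, hb⟩ := Submodule.mem_span_singleton.1 hy
  have hab : ι R x * a.unop = ι R y * b.unop := by
    simpa [smul_eq_mul] using congrArg unop hb.symm
  rw [← unop_eq_zero_iff, smul_eq_mul, unop_mul, unop_op, eq_zero_of_ι_mul_eq_ι_mul_s6 hxy hab,
    mul_zero]

end FreeAlgebra

section Injective

variable {A : Type u} [Ring A]

theorem IsInjectiveModule.pi {ι : Type u} {E : ι → Type u} [∀ i, AddCommGroup (E i)]
    [∀ i, Module A (E i)] (hE : ∀ i, IsInjectiveModule A (E i)) :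
    IsInjectiveModule A (∀ i, E i) := by
  intro B _ _ L g
  choose h hh using fun i => hE i B L (LinearMap.proj i ∘ₗ g)
  exact ⟨LinearMap.pi h, fun x => funext fun i => hh i x⟩

theorem IsDirectSummand.isInjectiveModule {N M : Type u} [AddCommGroup N] [AddCommGroup M]
    [Module A N] [Module A M] (hNM : IsDirectSummand A N M) (hM : IsInjectiveModule A M) :
    IsInjectiveModule A N := by
  obtain ⟨i, π, hπ⟩ := hNM
  intro B _ _ L g
  obtain ⟨h, hh⟩ := hM B L (i ∘ₗ g)
  refine ⟨π ∘ₗ h, fun x => ?_⟩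
  rw [LinearMap.comp_apply, hh, LinearMap.comp_apply, ← LinearMap.comp_apply π i, hπ,
    LinearMap.id_apply]

/-- The extension is built on `B ⧸ S`, into which `W` embeds. -/
theorem IsInjectiveModule.exists_extension_of_disjoint {D B : Type u} [AddCommGroup D]
    [Module A D] [AddCommGroup B] [Module A B] (hD : IsInjectiveModule A D)
    {W S : Submodule A B} (hWS : Disjoint W S) (f : W →ₗ[A] D) :
    ∃ h : B →ₗ[A] D, (∀ w : W, h w = f w) ∧ ∀ s ∈ S, h s = 0 := by
  set q : W →ₗ[A] B ⧸ S := S.mkQ ∘ₗ W.subtype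
  have hq : Function.Injective q := by
    rw [← LinearMap.ker_eq_bot, eq_bot_iff]
    intro w hw
    have hwS : (w : B) ∈ S := (Submodule.Quotient.mk_eq_zero S).1 hw
    exact (Submodule.mem_bot A).2 (Subtype.ext (Submodule.disjoint_def.1 hWS _ w.2 hwS))
  obtain ⟨h, hh⟩ := hD (B ⧸ S) (LinearMap.range q) (f ∘ₗ (LinearEquiv.ofInjective q hq).symm)
  refine ⟨h ∘ₗ S.mkQ, fun w => ?_, fun s hs => ?_⟩
  · have := hh (LinearEquiv.ofInjective q hq w)
    rwa [LinearMap.comp_apply, LinearEquiv.coe_coe, LinearEquiv.symm_apply_apply] at this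
  · rw [LinearMap.comp_apply, Submodule.mkQ_apply, (Submodule.Quotient.mk_eq_zero S).2 hs,
      map_zero]

end Injective

namespace Submodule

variable {A : Type u} [Ring A] {D : Type u} [AddCommGroup D] [Module A D]

def IsEssentialExtension (U W : Submodule A D) : Prop :=
  U ≤ W ∧ ∀ x ∈ W, x ≠ 0 → ∃ c : A, c • x ∈ U ∧ c • x ≠ 0

theorem isEssentialExtension_refl (U : Submodule A D) : U.IsEssentialExtension U :=
  ⟨le_rfl, fun x hx hx0 => ⟨1, by rwa [one_smul], by rwa [one_smul]⟩⟩

theorem IsEssentialExtension.disjoint {U W V : Submodule A D} (hUW : U.IsEssentialExtension W)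
    (hUV : Disjoint U V) : Disjoint W V := by
  rw [disjoint_def] at hUV ⊢
  intro x hxW hxV
  by_contra hx0
  obtain ⟨c, hcU, hc0⟩ := hUW.2 x hxW hx0
  exact hc0 (hUV _ hcU (V.smul_mem c hxV))

theorem exists_maximal_isEssentialExtension (U : Submodule A D) :
    ∃ W, Maximal U.IsEssentialExtension W := by
  obtain ⟨W, -, hW⟩ := zorn_le_nonempty₀ {W | U.IsEssentialExtension W}
    (fun c hcs hc W₀ hW₀ => ⟨sSup c, ⟨(hcs hW₀).1.trans (le_sSup hW₀), fun x hx hx0 => by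
      obtain ⟨W, hWc, hxW⟩ := (mem_sSup_of_directed ⟨W₀, hW₀⟩ hc.directedOn).1 hx
      exact (hcs hWc).2 x hxW hx0⟩, fun _ => le_sSup⟩) U (isEssentialExtension_refl U)
  exact ⟨W, hW⟩

theorem exists_le_maximal_disjoint {W V : Submodule A D} (hWV : Disjoint W V) :
    ∃ S, V ≤ S ∧ Maximal (Disjoint W) S :=
  zorn_le_nonempty₀ {S | Disjoint W S}
    (fun c hcs hc _ _ => ⟨sSup c, (hc.directedOn.disjoint_sSup_right).2 fun _ hS => hcs hS,
      fun _ => le_sSup⟩) V hWV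

/-- `W ⊕ S` is essential in the whole module when `S` is a maximal complement of `W`. -/
theorem exists_add_smul_mem_of_maximal_disjoint {W S : Submodule A D}
    (hS : Maximal (Disjoint W) S) {y : D} (hy : y ∉ S) :
    ∃ s ∈ S, ∃ c : A, s + c • y ∈ W ∧ s + c • y ≠ 0 := by
  by_contra! hne
  refine hy (hS.le_of_ge ?_ le_sup_left (mem_sup_right (mem_span_singleton_self y)))
  rw [disjoint_def]
  intro x hxW hxSy
  obtain ⟨s, hs, z, hz, rfl⟩ := mem_sup.1 hxSy
  obtain ⟨c, rfl⟩ := mem_span_singleton.1 hz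
  exact hne s hs c hxW

end Submodule

namespace IsInjectiveModule

open Submodule LinearMap

variable {A : Type u} [Ring A] {D : Type u} [AddCommGroup D] [Module A D]

theorem isCompl_of_maximal (hD : IsInjectiveModule A D) {U W S : Submodule A D}
    (hW : Maximal U.IsEssentialExtension W) (hS : Maximal (Disjoint W) S) : IsCompl W S := by
  obtain ⟨h, hWh, hSh⟩ := hD.exists_extension_of_disjoint hS.prop W.subtype
  have hW_le : W ≤ range h := fun w hw => ⟨w, hWh ⟨w, hw⟩⟩
  -- `range h` is again an essential extension of `U`, hence equals `W` by maximality
  have hrange : range h = W := by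
    refine le_antisymm (hW.le_of_ge ⟨hW.prop.1.trans hW_le, ?_⟩ hW_le) hW_le
    rintro _ ⟨y, rfl⟩ hy0
    obtain ⟨s, hs, c, hsyW, hsy0⟩ :=
      exists_add_smul_mem_of_maximal_disjoint hS fun hyS => hy0 (hSh y hyS)
    have hcy : c • h y = s + c • y := by
      simpa [hSh s hs] using hWh ⟨_, hsyW⟩
    obtain ⟨c', hc'U, hc'0⟩ := hW.prop.2 _ hsyW hsy0
    exact ⟨c' * c, by rwa [mul_smul, hcy], by rwa [mul_smul, hcy]⟩
  have hidem : IsIdempotentElem h :=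
    LinearMap.ext fun x => hWh ⟨h x, hrange ▸ mem_range_self h x⟩
  have hker : ker h = S := by
    refine (hS.eq_of_le ?_ fun s hs => mem_ker.2 (hSh s hs)).symm
    simpa [hrange] using hidem.isCompl.disjoint
  simpa [hrange, hker] using hidem.isCompl

theorem exists_isCompl_of_disjoint (hD : IsInjectiveModule A D) {U V : Submodule A D}
    (hU : U ≠ ⊥) (hV : V ≠ ⊥) (hUV : Disjoint U V) :
    ∃ U' V' : Submodule A D, U' ≠ ⊥ ∧ V' ≠ ⊥ ∧ IsCompl U' V' := by
  obtain ⟨W, hW⟩ := exists_maximal_isEssentialExtension U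
  obtain ⟨S, hVS, hS⟩ := exists_le_maximal_disjoint (hW.prop.disjoint hUV)
  exact ⟨W, S, ne_bot_of_le_ne_bot hU hW.prop.1, ne_bot_of_le_ne_bot hV hVS,
    hD.isCompl_of_maximal hW hS⟩

end IsInjectiveModule

section Cyclic

open Submodule LinearMap

theorem disjoint_span_smul_of_injective {A N : Type*} [Ring A] [AddCommGroup N] [Module A N]
    {u : N} (hu : Function.Injective (toSpanSingleton A N u)) {a b : A}
    (hab : Disjoint (span A {a}) (span A {b})) :
    Disjoint (span A {a • u}) (span A {b • u}) := by
  have hspan : ∀ c : A, span A {c • u} = (span A {c}).map (toSpanSingleton A N u) := by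
    intro c
    rw [Submodule.map_span, Set.image_singleton, toSpanSingleton_apply]
  rw [hspan, hspan]
  exact disjoint_map hu hab

theorem injective_toSpanSingleton_of_map_eq {R M N : Type*} [Ring R] [NoZeroDivisors R]
    [AddCommGroup M] [Module Rᵐᵒᵖ M] [AddCommGroup N] [Module Rᵐᵒᵖ N]
    {emb : R →ₗ[Rᵐᵒᵖ] M} (hemb : Function.Injective emb) (g : N →ₗ[Rᵐᵒᵖ] M) {u : N} {r : R}
    (hr : r ≠ 0) (hgu : g u = emb r) : Function.Injective (toSpanSingleton Rᵐᵒᵖ N u) := by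
  rw [injective_iff_map_eq_zero]
  intro c hc
  rw [toSpanSingleton_apply] at hc
  have : emb (r * c.unop) = 0 := by
    rw [← MulOpposite.smul_eq_mul_unop, map_smul, ← hgu, ← map_smul, hc, map_zero]
  rw [← unop_eq_zero_iff]
  exact (mul_eq_zero.1 ((injective_iff_map_eq_zero emb).1 hemb _ this)).resolve_left hr

theorem exists_smul_eq_of_range_essential {A M E : Type*} [Ring A] [AddCommGroup M] [Module A M]
    [AddCommGroup E] [Module A E] (emb : M →ₗ[A] E)
    (hess : ∀ U : Submodule A E, U ≠ ⊥ → range emb ⊓ U ≠ ⊥) {e : E} (he : e ≠ 0) :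
    ∃ (c : A) (r : M), r ≠ 0 ∧ c • e = emb r := by
  obtain ⟨z, hz, hz0⟩ := exists_mem_ne_zero_of_ne_bot
    (hess _ (mt span_singleton_eq_bot.1 he))
  obtain ⟨⟨r, rfl⟩, hze⟩ := mem_inf.1 hz
  obtain ⟨c, hc⟩ := mem_span_singleton.1 hze
  exact ⟨c, r, fun hr => hz0 (by rw [hr, map_zero]), hc⟩

end Cyclic

theorem injective_hull_of_free_algebra_no_indecomposable_summand
    (K : Type u) [Field K]
    (E : Type u) [AddCommGroup E] [Module (FreeAlgebra K (Fin 2))ᵐᵒᵖ E]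
    (hEinj : IsInjectiveModule (FreeAlgebra K (Fin 2))ᵐᵒᵖ E)
    (emb : FreeAlgebra K (Fin 2) →ₗ[(FreeAlgebra K (Fin 2))ᵐᵒᵖ] E)
    (hemb : Function.Injective emb)
    (hess : ∀ U : Submodule (FreeAlgebra K (Fin 2))ᵐᵒᵖ E, U ≠ ⊥ →
      LinearMap.range emb ⊓ U ≠ ⊥) :
    ∀ (ι : Type u) (D : Type u) [AddCommGroup D] [Module (FreeAlgebra K (Fin 2))ᵐᵒᵖ D],
      IsDirectSummand (FreeAlgebra K (Fin 2))ᵐᵒᵖ D (ι → E) → (∃ d : D, d ≠ 0) →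
      ∃ U V : Submodule (FreeAlgebra K (Fin 2))ᵐᵒᵖ D, U ≠ ⊥ ∧ V ≠ ⊥ ∧ IsCompl U V := by
  intro ι D _ _ hsum ⟨d, hd⟩
  have hD := hsum.isInjectiveModule (IsInjectiveModule.pi fun _ => hEinj)
  obtain ⟨i, π, hπ⟩ := hsum
  have hi : Function.Injective i := Function.LeftInverse.injective (LinearMap.congr_fun hπ)
  obtain ⟨k, hk⟩ := Function.ne_iff.1 ((map_ne_zero_iff i hi).2 hd)
  obtain ⟨c, r, hr, hcr⟩ := exists_smul_eq_of_range_essential emb hess hk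
  have hu := injective_toSpanSingleton_of_map_eq hemb (LinearMap.proj k ∘ₗ i) hr
    (u := c • d) (by simpa using hcr)
  have hne : ∀ x : Fin 2,
      Submodule.span (FreeAlgebra K (Fin 2))ᵐᵒᵖ {op (FreeAlgebra.ι K x) • c • d} ≠ ⊥ := fun x =>
    mt Submodule.span_singleton_eq_bot.1
      ((map_ne_zero_iff _ hu).2 ((op_ne_zero_iff _).2 (FreeAlgebra.ι_ne_zero x)))
  exact hD.exists_isCompl_of_disjoint (hne 0) (hne 1)
    (disjoint_span_smul_of_injective hu (FreeAlgebra.disjoint_span_op_ι zero_ne_one))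
end
end

section
/- Let R be a ring, let P be a class of right R-modules closed under isomorphism, arbitrary direct products and direct summands, and let S be the class of left R-modules M whose character module M* belongs to P. If P is a definable subcategory of right R-modules, then for every right R-module N one has N ∈ P if and only if N* ∈ S. -/
universe u

open MulOpposite DirectSum

noncomputable section

/-- The class of left `R`-modules whose character module lies in `P`. -/
def Sclass {R : Type u} [Ring R] (P : ModuleCat.{u} Rᵐᵒᵖ → Prop) :
    ModuleCat.{u} R → Prop :=
  fun M => P (ModuleCat.of Rᵐᵒᵖ (Character (M : Type u)))

/-!
The evaluation map `N → N**` is a pure embedding, so `N** ∈ P` gives `N ∈ P`.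

For the converse we use Prest's duality of pp formulas. The dual of `∃ x, C x = D u` is
`∃ z, Dᵀ z = χ ∧ Cᵀ z = 0`. It defines the annihilator, under the character pairing, of the
subgroup defined by the original formula. Dualising twice gives back the original formula,
so for a right module `M` the pp-definable subgroups of `M**` are the double annihilators of
those of `M`. Inclusions between pp-definable subgroups therefore pass from `M` to `M**`.
Hence, for finitely many linear systems with constants in `M**` that are solvable in `M**`
and one system that is not, some assignment `M** → M` of the constants keeps the first
solvable and the last unsolvable in `M`. Gathering these assignments over all such choices
gives a map from `M**` into a reduced power of `M`. This map preserves and reflects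
solvability of linear systems, so it is a pure embedding. The reduced power is a directed
colimit of products of copies of `M`, so it lies in `P`, and therefore so does `M**`.
-/

namespace Character

lemma sum_apply {X : Type u} [AddCommGroup X] {ι : Type*} (s : Finset ι)
    (φ : ι → Character X) (x : X) : (∑ i ∈ s, φ i) x = ∑ i ∈ s, φ i x :=
  AddMonoidHom.finsetSum_apply φ s x

@[simp] lemma zero_apply {X : Type u} [AddCommGroup X] (x : X) : (0 : Character X) x = 0 := rfl

def eval {R : Type u} [Ring R] (X : Type u) [AddCommGroup X] [Module Rᵐᵒᵖ X] :
    X →ₗ[Rᵐᵒᵖ] Character (Character X) where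
  toFun v := AddMonoidHom.mk' (fun χ : Character X => χ v) fun _ _ => rfl
  map_add' v w := ext fun χ => map_add χ v w
  map_smul' _ _ := rfl

end Character

lemma exists_ratCircle_comp_eq_of_ker_le {V W : Type*} [AddCommGroup V] [AddCommGroup W]
    (α : V →+ W) (f : V →+ RatCircle) (h : α.ker ≤ f.ker) :
    ∃ g : W →+ RatCircle, g.comp α = f := by
  let f₀ : α.range →+ RatCircle :=
    (QuotientAddGroup.lift α.ker f h).comp (QuotientAddGroup.quotientKerEquivRange α).symm
  obtain ⟨g, hg⟩ := CharacterModule.dual_surjective_of_injective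
    α.range.subtype.toIntLinearMap Subtype.val_injective f₀
  refine ⟨g, AddMonoidHom.ext fun v => ?_⟩
  have hv : (QuotientAddGroup.quotientKerEquivRange α).symm ⟨α v, v, rfl⟩ = v :=
    (AddEquiv.symm_apply_eq _).mpr rfl
  calc g (α v) = f₀ ⟨α v, v, rfl⟩ := DFunLike.congr_fun hg ⟨α v, v, rfl⟩
    _ = f v := by
      simp only [f₀, AddMonoidHom.coe_comp, AddMonoidHom.coe_coe, Function.comp_apply, hv,
        QuotientAddGroup.lift_mk]

lemma exists_ratCircle_eq_zero_on_ne_zero {V : Type*} [AddCommGroup V] {H : AddSubgroup V}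
    {v : V} (hv : v ∉ H) : ∃ g : V →+ RatCircle, (∀ w ∈ H, g w = 0) ∧ g v ≠ 0 := by
  obtain ⟨c, hc⟩ := CharacterModule.exists_character_apply_ne_zero_of_ne_zero
    (mt (QuotientAddGroup.eq_zero_iff v).mp hv)
  let c' : V ⧸ H →+ RatCircle := c
  refine ⟨c'.comp (QuotientAddGroup.mk' H), fun w hw => ?_, hc⟩
  simp [(QuotientAddGroup.eq_zero_iff w).mpr hw]

section PPSubgroup

variable {A : Type u} [Ring A] {κ μ ρ : Type*} [Fintype μ]

def matrixAct (X : Type*) [AddCommGroup X] [Module A X] (C : Matrix κ μ A) :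
    (μ → X) →+ (κ → X) :=
  AddMonoidHom.mk' (fun x j => ∑ k, C j k • x k) fun x y => by
    funext j
    simp [smul_add, Finset.sum_add_distrib]

def ppSubgroup [Fintype ρ] (C : Matrix κ μ A) (D : Matrix κ ρ A) (X : Type*) [AddCommGroup X]
    [Module A X] : AddSubgroup (ρ → X) :=
  (matrixAct X C).range.comap (matrixAct X D)

variable {X : Type*} [AddCommGroup X] [Module A X]

@[simp] lemma matrixAct_apply (C : Matrix κ μ A) (x : μ → X) (j : κ) :
    matrixAct X C x j = ∑ k, C j k • x k := rfl

@[simp] lemma matrixAct_one [DecidableEq μ] (x : μ → X) :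
    matrixAct X (1 : Matrix μ μ A) x = x := by
  funext k
  simp [Matrix.one_apply]

@[simp] lemma matrixAct_zero (x : μ → X) : matrixAct X (0 : Matrix κ μ A) x = 0 := by
  funext j
  simp

lemma matrixAct_one_submatrix [DecidableEq μ] (s : κ → μ) (x : μ → X) :
    matrixAct X ((1 : Matrix μ μ A).submatrix s id) x = x ∘ s := by
  funext j
  simp [Matrix.one_apply]

lemma matrixAct_fromRows {κ' : Type*} (C : Matrix κ μ A) (C' : Matrix κ' μ A) (x : μ → X) :
    matrixAct X (Matrix.fromRows C C') x = Sum.elim (matrixAct X C x) (matrixAct X C' x) := by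
  funext j
  cases j <;> rfl

lemma matrixAct_fromCols {μ' : Type*} [Fintype μ'] (C : Matrix κ μ A) (C' : Matrix κ μ' A)
    (x : μ ⊕ μ' → X) :
    matrixAct X (Matrix.fromCols C C') x =
      matrixAct X C (x ∘ Sum.inl) + matrixAct X C' (x ∘ Sum.inr) := by
  funext j
  simp [Fintype.sum_sum_type]

lemma mem_ppSubgroup [Fintype ρ] {C : Matrix κ μ A} {D : Matrix κ ρ A} {u : ρ → X} :
    u ∈ ppSubgroup C D X ↔ ∃ x, matrixAct X C x = matrixAct X D u := Iff.rfl

end PPSubgroup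

def dualParamMatrix (A' : Type u) [Ring A'] (ρ μ : Type*) [DecidableEq ρ] :
    Matrix (ρ ⊕ μ) ρ A' :=
  Matrix.fromRows 1 0

section Duality

variable {κ μ ρ : Type*} {X : Type u} [AddCommGroup X]

def charPair [Fintype ρ] (χ : ρ → Character X) : (ρ → X) →+ RatCircle :=
  AddMonoidHom.mk' (fun u => ∑ l, χ l (u l)) fun u v => by
    simp [map_add, Finset.sum_add_distrib]

variable [Fintype ρ]

@[simp] lemma charPair_apply (χ : ρ → Character X) (u : ρ → X) :
    charPair χ u = ∑ l, χ l (u l) := rfl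

lemma charPair_single [DecidableEq ρ] (χ : ρ → Character X) (l : ρ) (v : X) :
    charPair χ (Pi.single l v) = χ l v := by
  rw [charPair_apply, Finset.sum_eq_single l (fun l' _ hl' => by simp [hl']) (by simp)]
  simp

lemma exists_charPair_eq [DecidableEq ρ] (g : (ρ → X) →+ RatCircle) :
    ∃ χ : ρ → Character X, charPair χ = g :=
  ⟨fun l => g.comp (AddMonoidHom.single (fun _ => X) l), AddMonoidHom.ext fun u =>
    (charPair_apply _ u).trans <| by
      conv_rhs => rw [← Finset.univ_sum_single u, map_sum]
      rfl⟩

def charAnn (S : Set (ρ → X)) : Set (ρ → Character X) :=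
  {χ | ∀ u ∈ S, charPair χ u = 0}

lemma mem_of_forall_charAnn [DecidableEq ρ] {H : AddSubgroup (ρ → X)} {u : ρ → X}
    (h : ∀ χ ∈ charAnn (H : Set (ρ → X)), charPair χ u = 0) : u ∈ H := by
  by_contra hu
  obtain ⟨g, hgH, hgu⟩ := exists_ratCircle_eq_zero_on_ne_zero hu
  obtain ⟨χ, rfl⟩ := exists_charPair_eq g
  exact hgu (h χ hgH)

variable {A A' : Type u} [Ring A']

/-- With `dualParamMatrix`, encodes the dual `∃ z, Dᵀ z = χ ∧ Cᵀ z = 0` of the pp formula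
`∃ x, C x = D u`, as a system in `z` with one row per entry of `χ` and one per entry of `x`. -/
def dualWitnessMatrix (e : A → A') (C : Matrix κ μ A) (D : Matrix κ ρ A) :
    Matrix (ρ ⊕ μ) κ A' :=
  Matrix.fromRows (D.transpose.map e) (C.transpose.map e)

lemma mem_ppSubgroup_dual [Fintype κ] [DecidableEq ρ] {Y : Type*} [AddCommGroup Y]
    [Module A' Y] (e : A → A') (C : Matrix κ μ A) (D : Matrix κ ρ A) (χ : ρ → Y) :
    χ ∈ ppSubgroup (dualWitnessMatrix e C D) (dualParamMatrix A' ρ μ) Y ↔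
      ∃ z, matrixAct Y (D.transpose.map e) z = χ ∧ matrixAct Y (C.transpose.map e) z = 0 := by
  simp [mem_ppSubgroup, dualWitnessMatrix, dualParamMatrix, matrixAct_fromRows, funext_iff]

variable [Ring A] [Fintype κ] [Fintype μ] [Module A X] [Module A' (Character X)] (e : A → A')

lemma charPair_matrixAct (he : ∀ a (φ : Character X) v, (e a • φ) v = φ (a • v))
    (C : Matrix κ μ A) (z : κ → Character X) (x : μ → X) :
    charPair (matrixAct (Character X) (C.transpose.map e) z) x = charPair z (matrixAct X C x) := by
  simp only [charPair_apply, matrixAct_apply, Matrix.map_apply, Matrix.transpose_apply,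
    Character.sum_apply, he, map_sum]
  exact Finset.sum_comm

theorem coe_ppSubgroup_dual (he : ∀ a (φ : Character X) v, (e a • φ) v = φ (a • v))
    [DecidableEq ρ] (C : Matrix κ μ A) (D : Matrix κ ρ A) :
    (ppSubgroup (dualWitnessMatrix e C D) (dualParamMatrix A' ρ μ) (Character X) :
        Set (ρ → Character X)) =
      charAnn (ppSubgroup C D X : Set (ρ → X)) := by
  ext χ
  rw [SetLike.mem_coe, mem_ppSubgroup_dual]
  constructor
  · rintro ⟨z, rfl, hz⟩ u ⟨x, hx⟩
    rw [charPair_matrixAct e he, ← hx, ← charPair_matrixAct e he, hz]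
    simp
  · intro hχ
    classical
    -- `(u, x) ↦ charPair χ u` vanishes on `ker α`, so it factors through `α` (`ℚ/ℤ` is injective)
    let α : (ρ → X) × (μ → X) →+ (κ → X) :=
      (matrixAct X D).comp (AddMonoidHom.fst _ _) - (matrixAct X C).comp (AddMonoidHom.snd _ _)
    obtain ⟨g, hg⟩ := exists_ratCircle_comp_eq_of_ker_le α
      ((charPair χ).comp (AddMonoidHom.fst _ _)) fun p hp => hχ p.1 ⟨p.2, (sub_eq_zero.mp hp).symm⟩
    obtain ⟨z, rfl⟩ := exists_charPair_eq g
    refine ⟨z, funext fun l => Character.ext fun v => ?_, funext fun k => Character.ext fun v => ?_⟩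
    · have h := DFunLike.congr_fun hg (Pi.single l v, 0)
      simp only [α, AddMonoidHom.comp_apply, AddMonoidHom.sub_apply, AddMonoidHom.coe_fst,
        AddMonoidHom.coe_snd, map_zero, sub_zero, charPair_single] at h
      rw [← charPair_single, charPair_matrixAct e he, h]
    · have h := DFunLike.congr_fun hg (0, Pi.single k v)
      simp only [α, AddMonoidHom.comp_apply, AddMonoidHom.sub_apply, AddMonoidHom.coe_fst,
        AddMonoidHom.coe_snd, map_zero, zero_sub, map_neg, neg_eq_zero] at h
      rw [← charPair_single, charPair_matrixAct e he, h]
      rfl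

end Duality

theorem ppSubgroup_dual_dual {κ μ ρ : Type*} [Fintype κ] [Fintype μ] [Fintype ρ] [DecidableEq ρ]
    {A A' : Type u} [Ring A] [Ring A'] (e : A → A') (e' : A' → A) (hee : ∀ a, e' (e a) = a)
    (h0 : e' 0 = 0) (h1 : e' 1 = 1) (C : Matrix κ μ A) (D : Matrix κ ρ A)
    (Z : Type*) [AddCommGroup Z] [Module A Z] :
    ppSubgroup (dualWitnessMatrix e' (dualWitnessMatrix e C D) (dualParamMatrix A' ρ μ))
      (dualParamMatrix A ρ κ) Z = ppSubgroup C D Z := by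
  have hP : (dualParamMatrix A' ρ μ).transpose.map e' = Matrix.fromCols 1 0 := by
    simp [dualParamMatrix, Matrix.transpose_fromRows, Matrix.fromCols_map,
      Matrix.map_one e' h0 h1, h0]
  have hW : (dualWitnessMatrix e C D).transpose.map e' = Matrix.fromCols D C := by
    simp [dualWitnessMatrix, Matrix.transpose_fromRows, Matrix.fromCols_map,
      ← Matrix.transpose_map, Matrix.map_map, Function.comp_def, hee]
  ext u
  rw [mem_ppSubgroup_dual, hP, hW, mem_ppSubgroup]
  simp only [matrixAct_fromCols, matrixAct_one, matrixAct_zero, add_zero]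
  constructor
  · rintro ⟨w, rfl, hw⟩
    exact ⟨-(w ∘ Sum.inr), by rw [map_neg, neg_eq_iff_add_eq_zero, add_comm, hw]⟩
  · rintro ⟨x, hx⟩
    refine ⟨Sum.elim u (-x), rfl, ?_⟩
    simp [Sum.elim_comp_inr, hx]

section CharacterCharacter

variable {R : Type u} [Ring R] {κ μ ρ : Type*} [Fintype κ] [Fintype μ] [Fintype ρ]
  [DecidableEq ρ] {M : Type u} [AddCommGroup M] [Module Rᵐᵒᵖ M]

theorem coe_ppSubgroup_character_character (C : Matrix κ μ Rᵐᵒᵖ) (D : Matrix κ ρ Rᵐᵒᵖ) :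
    (ppSubgroup C D (Character (Character M)) : Set (ρ → Character (Character M))) =
      charAnn (charAnn (ppSubgroup C D M : Set (ρ → M))) := by
  rw [← ppSubgroup_dual_dual unop op op_unop op_zero op_one C D,
    coe_ppSubgroup_dual op (fun _ _ _ => rfl), coe_ppSubgroup_dual unop (fun _ _ _ => rfl)]

theorem ppSubgroup_character_character_mono {κ' μ' : Type*} [Fintype κ'] [Fintype μ']
    {C : Matrix κ μ Rᵐᵒᵖ} {D : Matrix κ ρ Rᵐᵒᵖ} {C' : Matrix κ' μ' Rᵐᵒᵖ}
    {D' : Matrix κ' ρ Rᵐᵒᵖ} (h : ppSubgroup C D M ≤ ppSubgroup C' D' M) :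
    ppSubgroup C D (Character (Character M)) ≤ ppSubgroup C' D' (Character (Character M)) := by
  intro u hu
  rw [← SetLike.mem_coe, coe_ppSubgroup_character_character] at hu ⊢
  exact fun χ hχ => hu χ fun v hv => hχ v (h hv)

end CharacterCharacter

/-- A system `∑ k, C j k • x k = b j` of the shape occurring in `IsPureEmbedding`, with
constants `b j ∈ N`. -/
structure LinearSystem (A N : Type u) : Type u where
  m : ℕ
  n : ℕ
  C : Matrix (Fin m) (Fin n) A
  b : Fin m → N

namespace LinearSystem

variable {A N : Type u}

def top [Zero A] : LinearSystem A N := ⟨0, 0, 0, Fin.elim0⟩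

def inf [Zero A] (c d : LinearSystem A N) : LinearSystem A N where
  m := c.m + d.m
  n := c.n + d.n
  C := Matrix.reindex finSumFinEquiv finSumFinEquiv (Matrix.fromBlocks c.C 0 0 d.C)
  b := Fin.append c.b d.b

variable [Ring A] {X : Type*} [AddCommGroup X] [Module A X]

def IsSolvable (c : LinearSystem A N) (X : Type*) [AddCommGroup X] [Module A X] (g : N → X) :
    Prop :=
  ∃ x, matrixAct X c.C x = g ∘ c.b

lemma isSolvable_iff_mem_ppSubgroup (c : LinearSystem A N) {ρ : Type*} [Fintype ρ]
    [DecidableEq ρ] (t : ρ → N) (s : Fin c.m → ρ) (hs : t ∘ s = c.b) (g : N → X) :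
    c.IsSolvable X g ↔ g ∘ t ∈ ppSubgroup c.C ((1 : Matrix ρ ρ A).submatrix s id) X := by
  rw [mem_ppSubgroup, matrixAct_one_submatrix, Function.comp_assoc, hs]
  rfl

lemma isSolvable_top (g : N → X) : (top : LinearSystem A N).IsSolvable X g :=
  ⟨0, funext fun j => j.elim0⟩

lemma isSolvable_inf {c d : LinearSystem A N} {g : N → X} :
    (c.inf d).IsSolvable X g ↔ c.IsSolvable X g ∧ d.IsSolvable X g := by
  change (∃ x : Fin (c.n + d.n) → X, matrixAct X (Matrix.reindex finSumFinEquiv finSumFinEquiv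
    (Matrix.fromBlocks c.C 0 0 d.C)) x = g ∘ Fin.append c.b d.b) ↔ _
  simp only [IsSolvable, funext_iff, Fin.forall_fin_add, Function.comp_apply, matrixAct_apply,
    Fin.sum_univ_add, Matrix.reindex_apply, Matrix.submatrix_apply,
    finSumFinEquiv_symm_apply_castAdd, finSumFinEquiv_symm_apply_natAdd,
    Matrix.fromBlocks_apply₁₁, Matrix.fromBlocks_apply₁₂, Matrix.fromBlocks_apply₂₁,
    Matrix.fromBlocks_apply₂₂, Matrix.zero_apply, zero_smul, Finset.sum_const_zero, add_zero,
    zero_add, Fin.append_left, Fin.append_right]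
  constructor
  · rintro ⟨x, hc, hd⟩
    exact ⟨⟨_, hc⟩, ⟨_, hd⟩⟩
  · rintro ⟨⟨x, hc⟩, ⟨y, hd⟩⟩
    exact ⟨Fin.append x y, by simpa using hc, by simpa using hd⟩

lemma isSolvable_foldr_inf {l : List (LinearSystem A N)} {g : N → X} :
    (l.foldr inf top).IsSolvable X g ↔ ∀ c ∈ l, c.IsSolvable X g := by
  induction l with
  | nil => simpa using isSolvable_top g
  | cons c l ih => simp [isSolvable_inf, ih]

end LinearSystem

section PureEmbedding

variable {A N X : Type u} [Ring A] [AddCommGroup N] [Module A N] [AddCommGroup X] [Module A X]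

lemma isPureEmbedding_of_isSolvable (i : N →ₗ[A] X)
    (h : ∀ c : LinearSystem A N, c.IsSolvable X i → c.IsSolvable N id) :
    IsPureEmbedding A i := by
  have pure : ∀ (m n : ℕ) (r : Matrix (Fin m) (Fin n) A) (l : Fin m → N),
      (∃ x : Fin n → X, ∀ j, ∑ k, r j k • x k = i (l j)) →
      ∃ y : Fin n → N, ∀ j, ∑ k, r j k • y k = l j := fun m n r l ⟨x, hx⟩ => by
    obtain ⟨y, hy⟩ := h ⟨m, n, r, l⟩ ⟨x, funext hx⟩
    exact ⟨y, congrFun hy⟩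
  refine ⟨(injective_iff_map_eq_zero i).mpr fun v hv => ?_, pure⟩
  -- the system `0 = v` (no unknowns) is solvable in `X` after applying `i`
  obtain ⟨y, hy⟩ := pure 1 0 0 (fun _ => v) ⟨0, fun _ => by simp [hv]⟩
  simpa using (hy 0).symm

lemma map_add_of_isSolvable {g : N → X}
    (hg : ∀ c : LinearSystem A N, c.IsSolvable N id → c.IsSolvable X g) (v w : N) :
    g (v + w) = g v + g w := by
  obtain ⟨x, hx⟩ := hg ⟨3, 2, !![1, 0; 0, 1; 1, 1], ![v, w, v + w]⟩
    ⟨![v, w], funext fun j => by fin_cases j <;> simp [Fin.sum_univ_two]⟩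
  obtain ⟨h₀, h₁, h₂⟩ : x 0 = g v ∧ x 1 = g w ∧ x 0 + x 1 = g (v + w) := by
    simpa [funext_iff, Fin.forall_fin_succ, Fin.sum_univ_two] using hx
  rw [← h₂, h₀, h₁]

lemma map_smul_of_isSolvable {g : N → X}
    (hg : ∀ c : LinearSystem A N, c.IsSolvable N id → c.IsSolvable X g) (a : A) (v : N) :
    g (a • v) = a • g v := by
  obtain ⟨x, hx⟩ := hg ⟨2, 1, !![1; a], ![v, a • v]⟩
    ⟨![v], funext fun j => by fin_cases j <;> simp⟩
  obtain ⟨h₀, h₁⟩ : x 0 = g v ∧ a • x 0 = g (a • v) := by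
    simpa [funext_iff, Fin.forall_fin_succ] using hx
  rw [← h₁, h₀]

lemma exists_isPureEmbedding_of_isSolvable_iff {g : N → X}
    (hg : ∀ c : LinearSystem A N, c.IsSolvable X g ↔ c.IsSolvable N id) :
    ∃ i : N →ₗ[A] X, IsPureEmbedding A i :=
  ⟨⟨⟨g, map_add_of_isSolvable fun c => (hg c).mpr⟩, map_smul_of_isSolvable fun c => (hg c).mpr⟩,
    isPureEmbedding_of_isSolvable _ fun c => (hg c).mp⟩

end PureEmbedding

theorem Character.isPureEmbedding_eval {R : Type u} [Ring R] (N : Type u) [AddCommGroup N]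
    [Module Rᵐᵒᵖ N] : IsPureEmbedding Rᵐᵒᵖ (eval (R := R) N) := by
  classical
  refine isPureEmbedding_of_isSolvable _ fun c hc => ?_
  rw [c.isSolvable_iff_mem_ppSubgroup c.b id rfl] at hc ⊢
  rw [← SetLike.mem_coe, coe_ppSubgroup_character_character] at hc
  exact mem_of_forall_charAnn fun χ hχ => hc χ hχ

section ReducedPower

open Filter

variable {A : Type u} [Ring A] {M : Type u} [AddCommGroup M] [Module A M] {J : Type*}

lemma matrixAct_germ {κ μ : Type*} [Fintype μ] (l : Filter J) (C : Matrix κ μ A)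
    (y : μ → J → M) (j : κ) :
    matrixAct (Germ l M) C (fun k => (y k : Germ l M)) j =
      ((fun p => matrixAct M C (fun k => y k p) j : J → M) : Germ l M) := by
  simp only [matrixAct_apply, ← Germ.coe_smul]
  rw [← Germ.coe_coeAddHom, ← map_sum]
  congr 1
  funext p
  simp [Finset.sum_apply]

theorem LinearSystem.isSolvable_germ_iff {N : Type u} (l : Filter J) (c : LinearSystem A N)
    (W : J → N → M) :
    c.IsSolvable (Germ l M) (fun v => ((fun p => W p v : J → M) : Germ l M)) ↔
      ∀ᶠ p in l, c.IsSolvable M (W p) := by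
  constructor
  · rintro ⟨x, hx⟩
    obtain ⟨y, rfl⟩ : ∃ y : Fin c.n → J → M, (fun k => (y k : Germ l M)) = x :=
      ⟨fun k => (x k).out, funext fun k => Quotient.out_eq (x k)⟩
    have h : ∀ j, ∀ᶠ p in l, matrixAct M c.C (fun k => y k p) j = W p (c.b j) := fun j =>
      Germ.coe_eq.mp ((matrixAct_germ l c.C y j).symm.trans (congrFun hx j))
    exact (eventually_all.mpr h).mono fun p hp => ⟨fun k => y k p, funext hp⟩
  · intro h
    have : ∀ p, ∃ x, c.IsSolvable M (W p) → matrixAct M c.C x = W p ∘ c.b := fun p => by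
      by_cases hp : c.IsSolvable M (W p)
      · exact (hp.imp fun x hx _ => hx)
      · exact ⟨0, fun h => absurd h hp⟩
    choose x hx using this
    refine ⟨fun k => ((fun p => x p k : J → M) : Germ l M), funext fun j => ?_⟩
    rw [matrixAct_germ]
    exact Germ.coe_eq.mpr (h.mono fun p hp => congrFun (hx p hp) j)

end ReducedPower

section DirectLimit

open Filter

variable {A : Type u} [Ring A] (M : Type u) [AddCommGroup M] [Module A M] {ι J : Type u}
  [Preorder ι] (π : J → ι)

def fiberRestrict (i j : ι) (h : i ≤ j) : ({p // i ≤ π p} → M) →ₗ[A] ({p // j ≤ π p} → M) :=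
  LinearMap.funLeft A M fun p => ⟨p.1, h.trans p.2⟩

instance : DirectedSystem (fun i => {p // i ≤ π p} → M)
    fun i j h => fiberRestrict (A := A) M π i j h :=
  ⟨fun _ _ => rfl, fun _ _ _ _ _ _ => rfl⟩

open Classical in
def germOfFiber (i : ι) : ({p // i ≤ π p} → M) →ₗ[A] Germ (comap π atTop) M where
  toFun g := ((fun p => if h : i ≤ π p then g ⟨p, h⟩ else 0 : J → M) : Germ (comap π atTop) M)
  map_add' g g' := by
    rw [← Germ.coe_add]
    congr 1
    funext p
    by_cases h : i ≤ π p <;> simp [h]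
  map_smul' a g := by
    rw [← Germ.coe_smul]
    congr 1
    funext p
    by_cases h : i ≤ π p <;> simp [h]

variable {M π}

lemma germOfFiber_eq {i : ι} {g : {p // i ≤ π p} → M} {y : J → M}
    (h : ∀ p (hp : i ≤ π p), g ⟨p, hp⟩ = y p) : germOfFiber (A := A) M π i g = y :=
  Germ.coe_eq.mpr <| (tendsto_comap.eventually (eventually_ge_atTop i)).mono fun p hp => by
    simp [hp, h p hp]

lemma germOfFiber_fiberRestrict {i j : ι} (hij : i ≤ j) (g : {p // i ≤ π p} → M) :
    germOfFiber (A := A) M π j (fiberRestrict (A := A) M π i j hij g) =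
      germOfFiber (A := A) M π i g :=
  germOfFiber_eq fun p hp => by simp [fiberRestrict, hij.trans hp]

variable (M π) [DecidableEq ι]

def directLimitToGerm :
    Module.DirectLimit (fun i => {p // i ≤ π p} → M) (fiberRestrict (A := A) M π) →ₗ[A]
      Germ (comap π atTop) M :=
  Module.DirectLimit.lift A ι _ _ (germOfFiber M π) fun _ _ => germOfFiber_fiberRestrict

lemma directLimitToGerm_bijective [IsDirectedOrder ι] [Nonempty ι] :
    Function.Bijective (directLimitToGerm (A := A) M π) := by
  constructor
  · refine (injective_iff_map_eq_zero _).mpr fun z hz => ?_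
    obtain ⟨i, g, rfl⟩ := Module.DirectLimit.exists_of z
    rw [directLimitToGerm, Module.DirectLimit.lift_of] at hz
    obtain ⟨j, hj⟩ := eventually_atTop.mp (eventually_comap.mp (Germ.coe_eq.mp hz))
    obtain ⟨k, hik, hjk⟩ := exists_ge_ge i j
    rw [← Module.DirectLimit.of_f (hij := hik)]
    convert map_zero (Module.DirectLimit.of A ι _ (fiberRestrict M π) k)
    funext p
    simpa [germOfFiber, fiberRestrict, hik.trans p.2] using hj _ (hjk.trans p.2) p rfl
  · intro y
    induction y using Germ.inductionOn with
    | h y =>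
      obtain ⟨i⟩ := ‹Nonempty ι›
      refine ⟨Module.DirectLimit.of A ι _ _ i fun p => y p, ?_⟩
      rw [directLimitToGerm, Module.DirectLimit.lift_of]
      exact germOfFiber_eq fun p hp => rfl

end DirectLimit

lemma mem_germ_comap_atTop {A : Type u} [Ring A] {P : ModuleCat.{u} A → Prop}
    (hiso : ∀ N N' : ModuleCat.{u} A, P N → ((N : Type u) ≃ₗ[A] (N' : Type u)) → P N')
    (hprod : ProdClosed A P) (hdir : DirLimClosed A P) {ι J : Type u} [Preorder ι]
    [IsDirectedOrder ι] [Nonempty ι] (π : J → ι) {M : ModuleCat.{u} A} (hM : P M) :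
    P (ModuleCat.of A (Filter.Germ (Filter.comap π Filter.atTop) M)) := by
  classical
  exact hiso _ _ (hdir ι _ (fiberRestrict (A := A) M π) fun i => hprod _ (fun _ => M) fun _ => hM)
    (LinearEquiv.ofBijective _ (directLimitToGerm_bijective M π))

namespace LinearSystem

variable {R : Type u} [Ring R] {M : Type u} [AddCommGroup M] [Module Rᵐᵒᵖ M]

theorem exists_isSolvable_not_isSolvable {c ν : LinearSystem Rᵐᵒᵖ (Character (Character M))}
    (hc : c.IsSolvable _ id) (hν : ¬ ν.IsSolvable _ id) :
    ∃ w : Character (Character M) → M, c.IsSolvable M w ∧ ¬ ν.IsSolvable M w := by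
  classical
  let B : Finset (Character (Character M)) := Finset.univ.image c.b ∪ Finset.univ.image ν.b
  have hcB {X : Type u} [AddCommGroup X] [Module Rᵐᵒᵖ X] (g : Character (Character M) → X) :=
    c.isSolvable_iff_mem_ppSubgroup ((↑) : B → _) (fun j => ⟨c.b j, by simp [B]⟩) rfl g
  have hνB {X : Type u} [AddCommGroup X] [Module Rᵐᵒᵖ X] (g : Character (Character M) → X) :=
    ν.isSolvable_iff_mem_ppSubgroup ((↑) : B → _) (fun j => ⟨ν.b j, by simp [B]⟩) rfl g
  -- otherwise `c` and `ν` would define nested subgroups of `M`, hence also of `M**`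
  by_contra! h
  refine hν ((hνB id).mpr (ppSubgroup_character_character_mono (fun u hu => ?_) ((hcB id).mp hc)))
  obtain ⟨w, rfl⟩ : ∃ w : Character (Character M) → M, w ∘ (↑) = u :=
    ⟨Function.extend Subtype.val u 0, funext (Subtype.val_injective.extend_apply u 0)⟩
  exact (hνB w).mp (h w ((hcB w).mpr hu))

theorem exists_forall_isSolvable_not_isSolvable
    {S : Finset (LinearSystem Rᵐᵒᵖ (Character (Character M)))} (hS : ∀ c ∈ S, c.IsSolvable _ id)
    {ν : LinearSystem Rᵐᵒᵖ (Character (Character M))} (hν : ¬ ν.IsSolvable _ id) :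
    ∃ w : Character (Character M) → M, (∀ c ∈ S, c.IsSolvable M w) ∧ ¬ ν.IsSolvable M w := by
  obtain ⟨w, hw, hνw⟩ := exists_isSolvable_not_isSolvable
    (isSolvable_foldr_inf.mpr fun c hc => hS c (Finset.mem_toList.mp hc)) hν
  exact ⟨w, fun c hc => isSolvable_foldr_inf.mp hw c (Finset.mem_toList.mpr hc), hνw⟩

end LinearSystem

open Filter in
theorem IsDefinable.mem_of_finitely_realized {A : Type u} [Ring A] {P : ModuleCat.{u} A → Prop}
    (hiso : ∀ N N' : ModuleCat.{u} A, P N → ((N : Type u) ≃ₗ[A] (N' : Type u)) → P N')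
    (hdef : IsDefinable A P) {N : Type u} [AddCommGroup N] [Module A N] {M : ModuleCat.{u} A}
    (hM : P M)
    (hNM : ∀ S : Finset (LinearSystem A N), (∀ c ∈ S, c.IsSolvable N id) →
      ∀ ν : LinearSystem A N, ¬ ν.IsSolvable N id →
        ∃ w : N → M, (∀ c ∈ S, c.IsSolvable M w) ∧ ¬ ν.IsSolvable M w) :
    P (ModuleCat.of A N) := by
  classical
  let T := {c : LinearSystem A N // c.IsSolvable N id}
  let F := {ν : LinearSystem A N // ¬ ν.IsSolvable N id}
  choose W hW hWν using fun p : Finset T × F =>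
    hNM (p.1.map (Function.Embedding.subtype _)) (by simpa using fun c hc _ => hc) p.2.1 p.2.2
  have key : ∀ c : LinearSystem A N,
      c.IsSolvable (Germ (comap (Prod.fst : Finset T × F → Finset T) atTop) M)
        (fun v => ((fun p => W p v : Finset T × F → M) : Germ (comap Prod.fst atTop) M)) ↔
        c.IsSolvable N id := by
    intro c
    rw [c.isSolvable_germ_iff]
    refine ⟨fun hc => ?_, fun hc => ?_⟩
    · by_contra hnc
      obtain ⟨S, hS⟩ := eventually_atTop.mp (eventually_comap.mp hc)
      exact hWν (S, ⟨c, hnc⟩) (hS S le_rfl _ rfl)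
    · refine (tendsto_comap.eventually (eventually_ge_atTop {⟨c, hc⟩})).mono fun p hp => ?_
      exact hW p c (Finset.mem_map.mpr ⟨⟨c, hc⟩, by simpa using hp, rfl⟩)
  obtain ⟨i, hi⟩ := exists_isPureEmbedding_of_isSolvable_iff key
  exact hdef.2.2 _ (ModuleCat.of A (Germ (comap Prod.fst atTop) M)) i hi
    (mem_germ_comap_atTop hiso hdef.1 hdef.2.1 Prod.fst hM)

theorem definable_P_gives_dual_pair_general
    {R : Type u} [Ring R] (P : ModuleCat.{u} Rᵐᵒᵖ → Prop)
    (hiso : ∀ (N N' : ModuleCat.{u} Rᵐᵒᵖ), P N → ((N : Type u) ≃ₗ[Rᵐᵒᵖ] (N' : Type u)) → P N')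
    (hdef : IsDefinable Rᵐᵒᵖ P) :
    ∀ N : ModuleCat.{u} Rᵐᵒᵖ,
      P N ↔ Sclass P (ModuleCat.of R (Character (N : Type u))) := fun N =>
  ⟨fun hN => hdef.mem_of_finitely_realized hiso hN
      fun _ hS _ hν => LinearSystem.exists_forall_isSolvable_not_isSolvable hS hν,
    hdef.2.2 N _ _ (Character.isPureEmbedding_eval N)⟩

theorem definable_P_gives_dual_pair
    {R : Type u} [Ring R] (P : ModuleCat.{u} Rᵐᵒᵖ → Prop)
    (hiso : ∀ (N N' : ModuleCat.{u} Rᵐᵒᵖ), P N → ((N : Type u) ≃ₗ[Rᵐᵒᵖ] (N' : Type u)) → P N')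
    (hprod : ProdClosed Rᵐᵒᵖ P)
    (hsummand : ∀ (N N' : ModuleCat.{u} Rᵐᵒᵖ), P N' →
      IsDirectSummand Rᵐᵒᵖ (N : Type u) (N' : Type u) → P N)
    (hdef : IsDefinable Rᵐᵒᵖ P) :
    ∀ N : ModuleCat.{u} Rᵐᵒᵖ,
      P N ↔ Sclass P (ModuleCat.of R (Character (N : Type u))) :=
  definable_P_gives_dual_pair_general P hiso hdef
end
end
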